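/- Let f : ℝⁿ → ℝ be convex and continuous, let Ω = {x : l ≤ x ≤ u} with lᵢ ≤ 0 ≤ uᵢ and lᵢ < uᵢ, and let λ₁ > 0. Then x* ∈ Ω is a local minimizer of f(x) + λ₁‖x₊‖₀ over Ω if and only if x* is a global minimizer of f over the set Ω_{s*} = {x ∈ Ω : xᵢ ≤ 0 for all i with xᵢ* = 0}. -/

import Mathlib

lemma coord_abs_le_dist (n : ℕ) (x y : EuclideanSpace ℝ (Fin n)) (i : Fin n) :
    |x i - y i| ≤ dist x y := by
  rw [EuclideanSpace.dist_eq, ← Real.sqrt_sq_eq_abs]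
  apply Real.sqrt_le_sqrt
  have := Finset.single_le_sum (f := fun j => dist (x j) (y j) ^ 2)
    (fun j _ => sq_nonneg _) (Finset.mem_univ i)
  simpa [Real.dist_eq] using this

theorem local_min_charac_lam2_zero (n : ℕ) (f : EuclideanSpace ℝ (Fin n) → ℝ)
    (hf : ConvexOn ℝ Set.univ f) (hfc : Continuous f)
    (l u : Fin n → ℝ) (hl : ∀ i, l i ≤ 0) (hu : ∀ i, 0 ≤ u i) (hlu : ∀ i, l i < u i)
    (lam1 : ℝ) (hlam1 : 0 < lam1)
    (Ω : Set (EuclideanSpace ℝ (Fin n)))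
    (hΩ : Ω = {x | ∀ i, l i ≤ x i ∧ x i ≤ u i})
    (F : EuclideanSpace ℝ (Fin n) → ℝ)
    (hF : F = fun x => f x + lam1 * (Finset.univ.filter (fun i => 0 < x i)).card)
    (xstar : EuclideanSpace ℝ (Fin n)) (hx : xstar ∈ Ω) :
    (∃ δ > (0 : ℝ), ∀ x ∈ Ω ∩ Metric.closedBall xstar δ, F xstar ≤ F x) ↔
    (∀ x ∈ Ω, (∀ i, xstar i = 0 → x i ≤ 0) → f xstar ≤ f x) := by
  subst hΩ hF
  simp only [Set.mem_setOf_eq] at hx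
  constructor
  · rintro ⟨δ, hδ, hmin⟩ x hxΩ hxS
    simp only [Set.mem_setOf_eq] at hxΩ
    -- choose a small step size t
    set N : ℝ := ‖x - xstar‖ with hN
    have hN0 : 0 ≤ N := norm_nonneg _
    set g : Fin n → ℝ := fun i => if xstar i < 0 then -xstar i / (u i - l i) else 1 with hg
    have hgpos : ∀ i, 0 < g i := by
      intro i
      simp only [hg]
      split_ifs with h
      · exact div_pos (by linarith) (by linarith [hlu i])
      · norm_num
    set S : Finset ℝ := insert (1 : ℝ) (Finset.univ.image g) with hS
    have hSne : S.Nonempty := ⟨1, by simp [hS]⟩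
    set c : ℝ := S.min' hSne with hc
    have hcpos : 0 < c := by
      have := S.min'_mem hSne
      rw [← hc] at this
      simp only [hS, Finset.mem_insert, Finset.mem_image] at this
      rcases this with h | ⟨i, _, h⟩
      · rw [h]; norm_num
      · rw [← h]; exact hgpos i
    have hc1 : c ≤ 1 := Finset.min'_le _ _ (by simp [hS])
    have hcg : ∀ i, c ≤ g i := fun i =>
      Finset.min'_le _ _ (Finset.mem_insert_of_mem
        (Finset.mem_image_of_mem g (Finset.mem_univ i)))
    set t : ℝ := min c (δ / (N + 1)) with ht
    have htpos : 0 < t := lt_min hcpos (div_pos hδ (by linarith))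
    have ht1 : t ≤ 1 := le_trans (min_le_left _ _) hc1
    have htδ : t * N ≤ δ := by
      have h1 : t ≤ δ / (N + 1) := min_le_right _ _
      have h2 : t * (N + 1) ≤ δ := by
        rw [← le_div_iff₀ (by linarith)]; exact h1
      nlinarith
    set y : EuclideanSpace ℝ (Fin n) := xstar + t • (x - xstar) with hy
    have hyi : ∀ i, y i = xstar i + t * (x i - xstar i) := by
      intro i; simp [hy, PiLp.add_apply, PiLp.smul_apply, PiLp.sub_apply]
    have hyΩ : ∀ i, l i ≤ y i ∧ y i ≤ u i := by
      intro i
      rw [hyi i]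
      obtain ⟨h1, h2⟩ := hx i
      obtain ⟨h3, h4⟩ := hxΩ i
      constructor <;> nlinarith
    have hydist : dist y xstar ≤ δ := by
      have : dist y xstar = |t| * ‖x - xstar‖ := by
        simp [hy, dist_eq_norm, norm_smul]
      rw [this, abs_of_pos htpos]
      exact htδ
    have hFy := hmin y ⟨hyΩ, Metric.mem_closedBall.mpr hydist⟩
    -- counting: supp₊ y ⊆ supp₊ xstar
    have hsub : (Finset.univ.filter (fun i => 0 < y i)) ⊆
        (Finset.univ.filter (fun i => 0 < xstar i)) := by
      intro i hi
      simp only [Finset.mem_filter, Finset.mem_univ, true_and] at hi ⊢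
      by_contra hcon
      push_neg at hcon
      rcases lt_or_eq_of_le hcon with hlt | heq
      · -- xstar i < 0
        have hgi : g i = -xstar i / (u i - l i) := by simp [hg, hlt]
        have hti : t ≤ -xstar i / (u i - l i) := by
          rw [← hgi]; exact le_trans (min_le_left _ _) (hcg i)
        have hul : 0 < u i - l i := by linarith [hlu i]
        have h5 : t * (u i - l i) ≤ -xstar i := by
          rw [← le_div_iff₀ hul]; exact hti
        have h6 : x i - xstar i ≤ u i - l i := by
          obtain ⟨h1, _⟩ := hx i; obtain ⟨_, h2⟩ := hxΩ i; linarith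
        rw [hyi i] at hi
        nlinarith
      · have hxi := hxS i heq
        rw [hyi i, heq] at hi
        nlinarith
    have hcard : ((Finset.univ.filter (fun i => 0 < y i)).card : ℝ) ≤
        ((Finset.univ.filter (fun i => 0 < xstar i)).card : ℝ) := by
      exact_mod_cast Finset.card_le_card hsub
    have hfxy : f xstar ≤ f y := by
      simp only at hFy
      nlinarith
    -- convexity
    have hyconv : y = (1 - t) • xstar + t • x := by
      ext i
      simp only [hy, PiLp.add_apply, PiLp.smul_apply, PiLp.sub_apply,
        smul_eq_mul]
      ring
    have hconv := hf.2 (Set.mem_univ xstar) (Set.mem_univ x)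
      (by linarith : (0:ℝ) ≤ 1 - t) (le_of_lt htpos) (by ring)
    rw [← hyconv] at hconv
    simp only [smul_eq_mul] at hconv
    nlinarith
  · intro hglob
    -- choose δ
    set P : Finset (Fin n) := Finset.univ.filter (fun i => 0 < xstar i) with hP
    set S : Finset ℝ := insert (1 : ℝ) (P.image (fun i => xstar i)) with hS
    have hSne : S.Nonempty := ⟨1, by simp [hS]⟩
    set c : ℝ := S.min' hSne with hc
    have hcpos : 0 < c := by
      have := S.min'_mem hSne
      rw [← hc] at this
      simp only [hS, Finset.mem_insert, Finset.mem_image] at this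
      rcases this with h | ⟨i, hi, h⟩
      · rw [h]; norm_num
      · rw [← h]
        simp only [hP, Finset.mem_filter] at hi
        exact hi.2
    have hcP : ∀ i ∈ P, c ≤ xstar i := fun i hi =>
      Finset.min'_le _ _ (by simp [hS]; right; exact ⟨i, hi, rfl⟩)
    -- continuity
    have hcont : ContinuousAt f xstar := hfc.continuousAt
    rw [Metric.continuousAt_iff] at hcont
    obtain ⟨δ₂, hδ₂, hδ₂f⟩ := hcont lam1 hlam1
    refine ⟨min (c / 2) (δ₂ / 2), lt_min (by linarith) (by linarith), ?_⟩
    rintro x ⟨hxΩ, hxB⟩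
    simp only [Set.mem_setOf_eq] at hxΩ
    rw [Metric.mem_closedBall] at hxB
    have hfx : f xstar < f x + lam1 := by
      have hd : dist x xstar < δ₂ := lt_of_le_of_lt (le_trans hxB (min_le_right _ _)) (by linarith)
      have := hδ₂f hd
      rw [Real.dist_eq] at this
      have := abs_lt.mp this
      linarith [this.1]
    have hcoord : ∀ i, |x i - xstar i| ≤ c / 2 :=
      fun i => le_trans (coord_abs_le_dist n x xstar i)
        (le_trans hxB (min_le_left _ _))
    have hPsub : P ⊆ Finset.univ.filter (fun i => 0 < x i) := by
      intro i hi
      have h1 := hcP i hi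
      have h2 := (abs_le.mp (hcoord i)).1
      simp only [Finset.mem_filter, Finset.mem_univ, true_and]
      linarith
    set Q : Finset (Fin n) := Finset.univ.filter (fun i => 0 < x i) with hQ
    have hPQ : (P.card : ℝ) ≤ (Q.card : ℝ) := by
      exact_mod_cast Finset.card_le_card hPsub
    by_cases hcase : ∀ i, xstar i = 0 → x i ≤ 0
    · have := hglob x hxΩ hcase
      simp only [← hP, ← hQ]
      nlinarith
    · push_neg at hcase
      obtain ⟨i0, hi0z, hi0p⟩ := hcase
      have hi0P : i0 ∉ P := by simp [hP, hi0z]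
      have hins : insert i0 P ⊆ Q := by
        intro j hj
        rcases Finset.mem_insert.mp hj with h | h
        · subst h; simp [hQ, hi0p]
        · exact hPsub h
      have hcard : P.card + 1 ≤ Q.card := by
        have := Finset.card_le_card hins
        rwa [Finset.card_insert_of_notMem hi0P] at this
      have hcard' : (P.card : ℝ) + 1 ≤ (Q.card : ℝ) := by exact_mod_cast hcard
      simp only [← hP, ← hQ]
      nlinarith
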